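/- arXiv:2306.05630 — 2 statements merged into one kernel-verified Lean document; each statement's English description precedes it below -/
import Mathlib

section
/- A complex Hilbert space has a unique semi-inner product, namely its inner product: if H is a complex Hilbert space and B : H × H → ℂ is linear in the first argument, satisfies B(x,x) = ‖x‖² for all x ∈ H, and satisfies |B(x,y)|² ≤ ‖x‖²·‖y‖² for all x, y ∈ H, then B(x,y) equals the inner product of x and y (linear in x, conjugate-linear in y) for all x, y ∈ H. -/
/-!
The functional `f = B (·) y` has norm at most `‖y‖` and attains it at `y`, since `f y = ‖y‖²`.
By Riesz, `f = ⟪z, ·⟫` with `‖z‖ = ‖f‖ ≤ ‖y‖` and `⟪z, y⟫ = ‖y‖²`; equality in Cauchy–Schwarz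
then forces `z = y`, because `‖z - y‖² = ‖z‖² - 2 re ⟪z, y⟫ + ‖y‖² ≤ 0`.
-/

open scoped InnerProductSpace

section

variable {𝕜 E : Type*} [RCLike 𝕜] [NormedAddCommGroup E] [InnerProductSpace 𝕜 E]

theorem eq_of_norm_le_of_re_inner_eq_norm_sq {y z : E} (hz : ‖z‖ ≤ ‖y‖)
    (hzy : RCLike.re ⟪z, y⟫_𝕜 = ‖y‖ ^ 2) : z = y := by
  have hsq : ‖z - y‖ ^ 2 ≤ 0 := by
    rw [norm_sub_sq (𝕜 := 𝕜), hzy]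
    nlinarith [norm_nonneg z]
  rw [← sub_eq_zero, ← norm_le_zero_iff]
  nlinarith [norm_nonneg (z - y)]

theorem eq_innerSL_of_opNorm_le_of_apply_self [CompleteSpace E] {f : E →L[𝕜] 𝕜} {y : E}
    (hf : ‖f‖ ≤ ‖y‖) (hfy : f y = ((‖y‖ ^ 2 : ℝ) : 𝕜)) : f = innerSL 𝕜 y := by
  set z := (InnerProductSpace.toDual 𝕜 E).symm f
  have hfz : f = innerSL 𝕜 z := by
    ext u
    exact (InnerProductSpace.toDual_symm_apply (x := u) (y := f)).symm
  have hzy : RCLike.re ⟪z, y⟫_𝕜 = ‖y‖ ^ 2 := by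
    rw [← innerSL_apply_apply, ← hfz, hfy, RCLike.ofReal_re]
  have hz : ‖z‖ ≤ ‖y‖ := by
    rwa [LinearIsometryEquiv.norm_map]
  rw [hfz, eq_of_norm_le_of_re_inner_eq_norm_sq hz hzy]

end

/-- a complex Hilbert space has a unique semi-inner product, namely its inner
product (taken linear in the first variable, conjugate-linear in the second, i.e.
`⟪y, x⟫_ℂ` in Mathlib's convention). -/
theorem semiInnerProduct_unique_hilbert (H : Type*) [NormedAddCommGroup H]
    [InnerProductSpace ℂ H] [CompleteSpace H]
    (B : H → H → ℂ)
    (hlin : ∀ y : H, IsLinearMap ℂ (fun x => B x y))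
    (hself : ∀ x : H, B x x = ((‖x‖ ^ 2 : ℝ) : ℂ))
    (hcs : ∀ x y : H, ‖B x y‖ ^ 2 ≤ ‖x‖ ^ 2 * ‖y‖ ^ 2) :
    ∀ x y : H, B x y = ⟪y, x⟫_ℂ := by
  intro x y
  have hbd : ∀ u, ‖B u y‖ ≤ ‖y‖ * ‖u‖ := fun u =>
    (pow_le_pow_iff_left₀ (norm_nonneg _) (by positivity) two_ne_zero).mp
      (by linarith [hcs u y, mul_pow ‖y‖ ‖u‖ 2])
  let f : H →L[ℂ] ℂ := ((hlin y).mk' _).mkContinuous ‖y‖ hbd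
  have hf : ‖f‖ ≤ ‖y‖ := LinearMap.mkContinuous_norm_le _ (norm_nonneg y) hbd
  have hfy : f y = ((‖y‖ ^ 2 : ℝ) : ℂ) := hself y
  exact congrArg (· x) (eq_innerSL_of_opNorm_le_of_apply_self hf hfy)
end

section
/- For 1 ≤ p < ∞ and any vector z = (u,v) ∈ ℂ² with ‖z‖_p = 1 and u ≠ 0 and v ≠ 0, the following are equivalent: (i) both [E₁ z, z]_p and [E₂ z, z]_p are nonnegative real numbers (i.e., σ₁ is a physical quantity at the pure state |z⟩); (ii) the complex number w = (v/u)·|u|^p + (u/v)·|v|^p is real and satisfies −1 ≤ w ≤ 1. -/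
/-- sign of a complex number: `u/|u|` if `u ≠ 0`, else `0`. -/
noncomputable def csign (u : ℂ) : ℂ := if u = 0 then 0 else u / ‖u‖

/-- the `p`-norm on `ℂ²`: `‖(a,b)‖_p = (|a|^p + |b|^p)^{1/p}`. -/
noncomputable def pnorm (p : ℝ) (x : Fin 2 → ℂ) : ℝ :=
  (‖x 0‖ ^ p + ‖x 1‖ ^ p) ^ (1 / p)

/-- the semi-inner product `[x,y]_p = ‖y‖_p^{2-p} (a·sign(c̄)|c|^{p-1} + b·sign(d̄)|d|^{p-1})`. -/
noncomputable def sip (p : ℝ) (x y : Fin 2 → ℂ) : ℂ :=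
  ((pnorm p y ^ (2 - p) : ℝ) : ℂ) *
    (x 0 * csign ((starRingEnd ℂ) (y 0)) * ((‖y 0‖ ^ (p - 1) : ℝ) : ℂ) +
     x 1 * csign ((starRingEnd ℂ) (y 1)) * ((‖y 1‖ ^ (p - 1) : ℝ) : ℂ))

/-!
On the unit sphere of `ℓ^p` the factor `‖z‖_p^{2-p}` is `1` and `sign(ȳ)|y|^{p-1} = |y|^p / y`,
so `[x, z]_p = x₀ |u|^p / u + x₁ |v|^p / v` is linear in `x`. Since `|u|^p + |v|^p = 1`, this gives
`[E₁z, z]_p = (1 + w)/2` and `[E₂z, z]_p = (1 - w)/2`, and both are nonnegative reals exactly when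
`w` is real with `-1 ≤ w ≤ 1`.
-/

open ComplexConjugate

lemma csign_conj {y : ℂ} (hy : y ≠ 0) : csign (conj y) = ‖y‖ / y := by
  have hny : (‖y‖ : ℂ) ≠ 0 := by exact_mod_cast norm_ne_zero_iff.mpr hy
  rw [csign, if_neg (by simpa using hy), Complex.norm_conj, div_eq_div_iff hny hy,
    Complex.conj_mul']
  ring

lemma mul_csign_conj_mul_norm_rpow_sub_one (p : ℝ) (x : ℂ) {y : ℂ} (hy : y ≠ 0) :
    x * csign (conj y) * ((‖y‖ ^ (p - 1) : ℝ) : ℂ) = x / y * ((‖y‖ ^ p : ℝ) : ℂ) := by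
  have hny : ‖y‖ ≠ 0 := norm_ne_zero_iff.mpr hy
  have hny' : (‖y‖ : ℂ) ≠ 0 := by exact_mod_cast hny
  rw [csign_conj hy, Real.rpow_sub_one hny, Complex.ofReal_div]
  field_simp

lemma norm_rpow_add_norm_rpow_eq_one {p : ℝ} (hp : p ≠ 0) {z : Fin 2 → ℂ}
    (hz : pnorm p z = 1) : ‖z 0‖ ^ p + ‖z 1‖ ^ p = 1 := by
  rw [pnorm, one_div] at hz
  rw [← Real.rpow_inv_rpow (by positivity : 0 ≤ ‖z 0‖ ^ p + ‖z 1‖ ^ p) hp, hz,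
    Real.one_rpow]

lemma sip_of_pnorm_eq_one {p : ℝ} {y : Fin 2 → ℂ} (hy : pnorm p y = 1)
    (h0 : y 0 ≠ 0) (h1 : y 1 ≠ 0) (x : Fin 2 → ℂ) :
    sip p x y = x 0 / y 0 * ((‖y 0‖ ^ p : ℝ) : ℂ) + x 1 / y 1 * ((‖y 1‖ ^ p : ℝ) : ℂ) := by
  rw [sip, hy, Real.one_rpow, Complex.ofReal_one, one_mul,
    mul_csign_conj_mul_norm_rpow_sub_one p _ h0, mul_csign_conj_mul_norm_rpow_sub_one p _ h1]

lemma half_smul_mulVec (c : ℂ) (z : Fin 2 → ℂ) :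
    ((1 / 2 : ℂ) • !![1, c; c, 1]).mulVec z = ![(z 0 + c * z 1) / 2, (c * z 0 + z 1) / 2] := by
  ext i
  fin_cases i <;> simp [Matrix.mulVec, dotProduct, Fin.sum_univ_two] <;> ring

lemma sip_half_smul_mulVec {p : ℝ} (hp : p ≠ 0) {z : Fin 2 → ℂ} (hz : pnorm p z = 1)
    (h0 : z 0 ≠ 0) (h1 : z 1 ≠ 0) (c : ℂ) :
    sip p (((1 / 2 : ℂ) • !![1, c; c, 1]).mulVec z) z =
      (1 + c * (z 1 / z 0 * ((‖z 0‖ ^ p : ℝ) : ℂ) + z 0 / z 1 * ((‖z 1‖ ^ p : ℝ) : ℂ))) / 2 := by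
  have hsum : ((‖z 0‖ ^ p : ℝ) : ℂ) + ((‖z 1‖ ^ p : ℝ) : ℂ) = 1 := by
    exact_mod_cast norm_rpow_add_norm_rpow_eq_one hp hz
  rw [half_smul_mulVec, sip_of_pnorm_eq_one hz h0 h1]
  simp only [Matrix.cons_val_zero, Matrix.cons_val_one]
  field_simp
  linear_combination z 0 * z 1 * hsum

lemma half_one_add_nonneg_and_half_one_sub_nonneg_iff (w : ℂ) :
    ((((1 + w) / 2).im = 0 ∧ 0 ≤ ((1 + w) / 2).re) ∧
      (((1 - w) / 2).im = 0 ∧ 0 ≤ ((1 - w) / 2).re)) ↔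
    (w.im = 0 ∧ -1 ≤ w.re ∧ w.re ≤ 1) := by
  simp only [Complex.div_ofNat_re, Complex.div_ofNat_im, Complex.add_re, Complex.add_im,
    Complex.sub_re, Complex.sub_im, Complex.one_re, Complex.one_im]
  constructor
  · rintro ⟨⟨h₁, h₂⟩, -, h₄⟩
    exact ⟨by linarith, by linarith, by linarith⟩
  · rintro ⟨h₁, h₂, h₃⟩
    exact ⟨⟨by linarith, by linarith⟩, by linarith, by linarith⟩

/-- for `1 ≤ p < ∞` and a unit vector `z = (u,v)` in `(ℂ², ‖·‖_p)` with
`u ≠ 0` and `v ≠ 0`: both `[E₁z,z]_p` and `[E₂z,z]_p` are nonnegative real numbers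
(i.e. `σ₁` is a physical quantity at `|z⟩`) if and only if
`w = (v/u)|u|^p + (u/v)|v|^p` is real with `-1 ≤ w ≤ 1`. -/
theorem pauli_sigma1_physical_quantity_iff (p : ℝ) (hp : 1 ≤ p)
    (E₁ E₂ : Matrix (Fin 2) (Fin 2) ℂ)
    (hE₁ : E₁ = (1 / 2 : ℂ) • !![1, 1; 1, 1])
    (hE₂ : E₂ = (1 / 2 : ℂ) • !![1, -1; -1, 1])
    (z : Fin 2 → ℂ) (hz : pnorm p z = 1) (hu : z 0 ≠ 0) (hv : z 1 ≠ 0) :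
    (((sip p (E₁.mulVec z) z).im = 0 ∧ 0 ≤ (sip p (E₁.mulVec z) z).re) ∧
     ((sip p (E₂.mulVec z) z).im = 0 ∧ 0 ≤ (sip p (E₂.mulVec z) z).re)) ↔
    ((z 1 / z 0 * ((‖z 0‖ ^ p : ℝ) : ℂ)
        + z 0 / z 1 * ((‖z 1‖ ^ p : ℝ) : ℂ)).im = 0 ∧
      -1 ≤ (z 1 / z 0 * ((‖z 0‖ ^ p : ℝ) : ℂ)
        + z 0 / z 1 * ((‖z 1‖ ^ p : ℝ) : ℂ)).re ∧
      (z 1 / z 0 * ((‖z 0‖ ^ p : ℝ) : ℂ)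
        + z 0 / z 1 * ((‖z 1‖ ^ p : ℝ) : ℂ)).re ≤ 1) := by
  have hp0 : p ≠ 0 := by positivity
  rw [hE₁, hE₂, sip_half_smul_mulVec hp0 hz hu hv, sip_half_smul_mulVec hp0 hz hu hv,
    one_mul, neg_one_mul, ← sub_eq_add_neg]
  exact half_one_add_nonneg_and_half_one_sub_nonneg_iff _
end
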